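/- (Measurability of approximate derivatives.) Let D ⊆ ℝ^n be measurable, k a nonnegative integer, and f : D → ℝ a measurable function which is approximately differentiable of order k at almost every point of D. Then there exist measurable functions a_J : D → ℝ, one for each multi-index J with |J| ≤ k, such that for almost every x₀ ∈ D, f is approximately differentiable of order k at x₀ with polynomial x ↦ Σ_{|J| ≤ k} a_J(x₀) (x − x₀)^J. (This is the paper's Proposition 4.3 specialized to the abelian Carnot group ℝ^n.) -/

import Mathlib

open MeasureTheory Metric Filter

noncomputable section

/-- `ℝ^n` with the Euclidean norm. -/
abbrev Euc (n : ℕ) := EuclideanSpace ℝ (Fin n)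

/-- A set `S ⊆ ℝ^n` has density one at `x` if
`vol(S ∩ B(x,r))/vol(B(x,r)) → 1` as `r → 0⁺`. -/
def DensityOneAt {n : ℕ} (S : Set (Euc n)) (x : Euc n) : Prop :=
  Tendsto (fun r : ℝ => volume (S ∩ ball x r) / volume (ball x r))
    (nhdsWithin 0 (Set.Ioi 0)) (nhds 1)

/-- A set has density zero at `x` if its complement has density one at `x`. -/
def DensityZeroAt {n : ℕ} (S : Set (Euc n)) (x : Euc n) : Prop :=
  DensityOneAt Sᶜ x

/-- Degree `|J|` of a multi-index. -/
def mdeg {n : ℕ} (J : Fin n → ℕ) : ℕ := ∑ i, J i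

/-- Monomial `x^J = x₁^{j₁} ⋯ xₙ^{jₙ}`. -/
def mpow {n : ℕ} (x : Euc n) (J : Fin n → ℕ) : ℝ := ∏ i, (x i) ^ (J i)

/-- `J! = j₁! ⋯ jₙ!`. -/
def Jfact {n : ℕ} (J : Fin n → ℕ) : ℕ := ∏ i, Nat.factorial (J i)

/-- `p : ℝ^n → ℝ` is a polynomial function of (total) degree at most `k`. -/
def IsPolyFun (n k : ℕ) (p : Euc n → ℝ) : Prop :=
  ∃ P : MvPolynomial (Fin n) ℝ, P.totalDegree ≤ k ∧
    ∀ x : Euc n, p x = MvPolynomial.eval (fun i => x i) P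

/-- `f : D → ℝ` is approximately differentiable of order `k` at `x₀` (a density point
of `D`) with polynomial `p`: `p` has degree at most `k` and for every `ε > 0` the set
`{x ∈ D : |f x − p x| > ε ‖x − x₀‖^k}` has density zero at `x₀`. -/
def ApproxDiffAt {n : ℕ} (k : ℕ) (D : Set (Euc n)) (f : Euc n → ℝ)
    (x₀ : Euc n) (p : Euc n → ℝ) : Prop :=
  DensityOneAt D x₀ ∧ IsPolyFun n k p ∧
    ∀ ε : ℝ, 0 < ε →
      DensityZeroAt {x | x ∈ D ∧ ε * ‖x - x₀‖ ^ k < |f x - p x|} x₀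

/-- `f : D → ℝ` has an approximate `(k−1)`-Taylor polynomial at `x₀` (a density point
of `D`) with polynomial `p`: `p` has degree at most `k−1` and there is `M > 0` such that
`{x ∈ D : |f x − p x| > M ‖x − x₀‖^k}` has density zero at `x₀`. -/
def HasApproxTaylorAt {n : ℕ} (k : ℕ) (D : Set (Euc n)) (f : Euc n → ℝ)
    (x₀ : Euc n) (p : Euc n → ℝ) : Prop :=
  DensityOneAt D x₀ ∧ IsPolyFun n (k - 1) p ∧
    ∃ M : ℝ, 0 < M ∧
      DensityZeroAt {x | x ∈ D ∧ M * ‖x - x₀‖ ^ k < |f x - p x|} x₀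

/-- The finset of multi-indices `J` with `|J| ≤ k`. -/
def multiIdxLe (n k : ℕ) : Finset (Fin n → ℕ) :=
  (Fintype.piFinset fun _ : Fin n => Finset.range (k+1)).filter fun J => mdeg J ≤ k

/-- The finset of multi-indices `J` with `|J| < k` (i.e. `|J| ≤ k−1`). -/
def multiIdxLt (n k : ℕ) : Finset (Fin n → ℕ) :=
  (Fintype.piFinset fun _ : Fin n => Finset.range (k+1)).filter fun J => mdeg J < k

/-- Partial derivative `∂g/∂xᵢ` (as a line derivative in the direction `eᵢ`). -/
def pd {n : ℕ} (i : Fin n) (g : Euc n → ℝ) : Euc n → ℝ :=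
  fun x => lineDeriv ℝ g x (EuclideanSpace.single i 1)

/-- The list of directions `(1,…,1,2,…,2,…)` (direction `i` repeated `J i` times)
encoding the iterated partial derivative `∂^{|J|}/∂x₁^{j₁}⋯∂xₙ^{jₙ}`. -/
def multiList (n : ℕ) (J : Fin n → ℕ) : List (Fin n) :=
  (List.finRange n).flatMap fun i => List.replicate (J i) i

/-- Iterated partial derivatives along a list of coordinate directions
(the head of the list is the outermost derivative). -/
def iterD {n : ℕ} : List (Fin n) → (Euc n → ℝ) → (Euc n → ℝ)
  | [], g => g
  | i :: L, g => pd i (iterD L g)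

/-- The iterated partial derivatives along the list `L` all exist at every point. -/
def iterDExists {n : ℕ} : List (Fin n) → (Euc n → ℝ) → Prop
  | [], _ => True
  | i :: L, g => iterDExists L g ∧
      ∀ x : Euc n, LineDifferentiableAt ℝ (iterD L g) x (EuclideanSpace.single i 1)

/-- `D^J u = ∂^{|J|}u/∂x₁^{j₁}⋯∂xₙ^{jₙ}`. -/
def DJ {n : ℕ} (J : Fin n → ℕ) (u : Euc n → ℝ) : Euc n → ℝ := iterD (multiList n J) u

/-- The Taylor polynomial of `u` of degree `k−1` centered at `x₀`:
`P_{x₀}(y) = Σ_{|I| ≤ k−1} D^I u(x₀) (y − x₀)^I / I!`. -/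
def TaylorPoly {n : ℕ} (k : ℕ) (u : Euc n → ℝ) (x₀ : Euc n) : Euc n → ℝ :=
  fun y => ∑ I ∈ multiIdxLt n k, DJ I u x₀ * mpow (y - x₀) I / (Jfact I : ℝ)

/-- `u` belongs to `Lip(k, ℝ^n)` with constant `M`: all partial derivatives `D^J u`
with `|J| ≤ k−1` exist at every point, and for all such `J` and all `x, x₀`,
`|D^J u(x₀)| ≤ M` and `|D^J u(x) − D^J P_{x₀}(x)| ≤ M ‖x − x₀‖^{k−|J|}`. -/
def MemLip (n k : ℕ) (M : ℝ) (u : Euc n → ℝ) : Prop :=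
  (∀ J : Fin n → ℕ, mdeg J < k → iterDExists (multiList n J) u) ∧
  ∀ J : Fin n → ℕ, mdeg J < k → ∀ x x₀ : Euc n,
    |DJ J u x₀| ≤ M ∧
    |DJ J u x - DJ J (TaylorPoly k u x₀) x| ≤ M * ‖x - x₀‖ ^ (k - mdeg J)

/-- Truncation of `f` at level `h`: equals `f` where `−h < f < h`, equals `h` where
`f ≥ h`, and equals `−h` where `f ≤ −h`. -/
def trunc {n : ℕ} (h : ℕ) (f : Euc n → ℝ) : Euc n → ℝ :=
  fun x => if (h : ℝ) ≤ f x then (h : ℝ) else if f x ≤ -(h : ℝ) then -(h : ℝ) else f x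

open Set Topology
open scoped ENNReal Pointwise

/-!
The approximating polynomial is unique. The difference `q` of two of them, recentred at `x₀`, is a
polynomial of degree `≤ k` with `|q y| ≤ ε ‖y‖ ^ k` off a set of density zero at `0`. If `q ≠ 0`,
let `Q` be its homogeneous component of lowest degree `j ≤ k` and `U ⊆ B(0,1)` an open set on which
`|Q| > δ > 0`; for small `t` the remaining components are `O(t ^ (j + 1))` on `U`, so
`|q| > (δ / 2) t ^ j ≥ (δ / 2) ‖·‖ ^ k` on `t • U`, a set filling a fixed proportion of `B(0,t)`.

Hence, for a measurable extension `F` of `f`, the pairs `(x₀, c)` such that the polynomial with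
coefficients `c` centred at `x₀` approximates `F` at `x₀` form the graph of a function. Lebesgue
measure is doubling, so densities can be tested along the radii `2⁻ᵐ` and with rational `ε`, which
makes this graph a Borel set in a standard Borel space. Its projection to `ℝⁿ` is injective, hence a
measurable embedding by the Lusin–Souslin theorem, and the function it defines is measurable.
-/

namespace MvPolynomial

variable {σ τ R : Type*}

section CommSemiring

variable [CommSemiring R]

theorem totalDegree_aeval_le (P : MvPolynomial σ R) {g : σ → MvPolynomial τ R}
    (hg : ∀ i, (g i).totalDegree ≤ 1) : (aeval g P).totalDegree ≤ P.totalDegree := by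
  conv_lhs => rw [P.as_sum, map_sum]
  refine totalDegree_finsetSum_le fun d hd => ?_
  rw [aeval_monomial, algebraMap_eq]
  refine (totalDegree_mul _ _).trans ?_
  rw [totalDegree_C, zero_add]
  refine (totalDegree_finsetProd _ _).trans
    ((Finset.sum_le_sum fun i _ => ?_).trans (le_totalDegree hd))
  exact (totalDegree_pow _ _).trans (by simpa using Nat.mul_le_mul_left (d i) (hg i))

theorem IsHomogeneous.eval_smul {φ : MvPolynomial σ R} {m : ℕ} (hφ : φ.IsHomogeneous m)
    (t : R) (x : σ → R) : eval (t • x) φ = t ^ m * eval x φ := by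
  rw [eval_eq, eval_eq, Finset.mul_sum]
  refine Finset.sum_congr rfl fun d hd => ?_
  have hdeg : ∑ i ∈ d.support, d i = m := by
    simpa [Finsupp.sum, Finsupp.degree, Finsupp.weight_apply] using hφ (mem_support_iff.1 hd)
  simp only [Pi.smul_apply, smul_eq_mul, mul_pow, Finset.prod_mul_distrib,
    Finset.prod_pow_eq_pow_sum, hdeg]
  ring

theorem exists_homogeneousComponent_ne_zero {P : MvPolynomial σ R} (hP : P ≠ 0) :
    ∃ j ≤ P.totalDegree, homogeneousComponent j P ≠ 0 ∧ ∀ i < j, homogeneousComponent i P = 0 := by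
  classical
  have hex : ∃ j, homogeneousComponent j P ≠ 0 := by
    by_contra! h
    exact hP (by rw [← sum_homogeneousComponent P]; simp [h])
  refine ⟨Nat.find hex, ?_, Nat.find_spec hex, fun i hi => not_not.1 (Nat.find_min hex hi)⟩
  by_contra! h
  exact Nat.find_spec hex (homogeneousComponent_eq_zero _ _ h)

end CommSemiring

open Finset in
theorem exists_bound_eval_smul_sub {P : MvPolynomial σ ℝ} {j : ℕ} (hj : j ≤ P.totalDegree)
    (hlow : ∀ i < j, homogeneousComponent i P = 0) {K : Set (σ → ℝ)} (hK : IsCompact K) :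
    ∃ C, ∀ y ∈ K, ∀ t ∈ Set.Icc (0 : ℝ) 1,
      |eval (t • y) P - t ^ j * eval y (homogeneousComponent j P)| ≤ C * t ^ (j + 1) := by
  let e (i : ℕ) (y : σ → ℝ) : ℝ := eval y (homogeneousComponent i P)
  obtain ⟨C, hC⟩ := hK.exists_bound_of_continuousOn
    (f := fun y => ∑ i ∈ range (P.totalDegree + 1), |e i y|)
    (continuous_finsetSum _ fun i _ => (continuous_eval _).abs).continuousOn
  refine ⟨C, fun y hy t ht => ?_⟩
  have hsplit : eval (t • y) P - t ^ j * e j y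
      = ∑ i ∈ range (P.totalDegree + 1), (t ^ i * e i y - if i = j then t ^ i * e i y else 0) := by
    rw [sum_sub_distrib, sum_ite_eq', if_pos (mem_range.2 (Nat.lt_succ_of_le hj))]
    conv_lhs => rw [← sum_homogeneousComponent P]
    simp [e, (homogeneousComponent_isHomogeneous _ _).eval_smul]
  have hterm : ∀ i ∈ range (P.totalDegree + 1),
      |t ^ i * e i y - if i = j then t ^ i * e i y else 0| ≤ t ^ (j + 1) * |e i y| := by
    intro i _
    rcases lt_trichotomy i j with h | rfl | h
    · simp [e, hlow i h, h.ne]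
    · rw [if_pos rfl, sub_self, abs_zero]
      exact mul_nonneg (pow_nonneg ht.1 _) (abs_nonneg _)
    · rw [if_neg h.ne', sub_zero, abs_mul, abs_of_nonneg (pow_nonneg ht.1 _)]
      exact mul_le_mul_of_nonneg_right (pow_le_pow_of_le_one ht.1 ht.2 h) (abs_nonneg _)
  calc |eval (t • y) P - t ^ j * e j y|
      ≤ ∑ i ∈ range (P.totalDegree + 1), t ^ (j + 1) * |e i y| := by
        rw [hsplit]; exact (abs_sum_le_sum_abs _ _).trans (sum_le_sum hterm)
    _ = t ^ (j + 1) * ∑ i ∈ range (P.totalDegree + 1), |e i y| := (mul_sum ..).symm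
    _ ≤ C * t ^ (j + 1) := by
        rw [mul_comm]
        exact mul_le_mul_of_nonneg_right ((le_abs_self _).trans (hC y hy)) (pow_nonneg ht.1 _)

end MvPolynomial

section PolyFun

variable {n k : ℕ}

open MvPolynomial

theorem IsPolyFun.comp_const_add {p : Euc n → ℝ} (hp : IsPolyFun n k p) (a : Euc n) :
    IsPolyFun n k (fun x => p (a + x)) := by
  obtain ⟨P, hPk, hP⟩ := hp
  refine ⟨aeval (fun i => C (a i) + X i) P, (totalDegree_aeval_le P fun i => ?_).trans hPk,
    fun x => ?_⟩
  · exact (totalDegree_add _ _).trans (by simp)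
  · show p (a + x) = _
    conv_rhs => rw [← aeval_eq_eval, aeval_eq_bind₁, aeval_bind₁]
    simp [hP, aeval_eq_eval]

theorem IsPolyFun.sub {p q : Euc n → ℝ} (hp : IsPolyFun n k p) (hq : IsPolyFun n k q) :
    IsPolyFun n k (p - q) := by
  obtain ⟨P, hPk, hP⟩ := hp
  obtain ⟨Q, hQk, hQ⟩ := hq
  exact ⟨P - Q, (totalDegree_sub P Q).trans (max_le hPk hQk), fun x => by simp [hP, hQ]⟩

theorem IsPolyFun.continuous {p : Euc n → ℝ} (hp : IsPolyFun n k p) : Continuous p := by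
  obtain ⟨P, -, hP⟩ := hp
  rw [funext hP]
  exact (continuous_eval P).comp (PiLp.continuous_ofLp 2 _)

theorem mem_multiIdxLe {J : Fin n → ℕ} : J ∈ multiIdxLe n k ↔ mdeg J ≤ k := by
  refine Finset.mem_filter.trans
    (and_iff_right_of_imp fun hJ => Fintype.mem_piFinset.2 fun i => Finset.mem_range.2 ?_)
  exact Nat.lt_succ_of_le ((Finset.single_le_sum (by simp) (Finset.mem_univ i)).trans hJ)

def coeffPoly (k : ℕ) (c : (Fin n → ℕ) → ℝ) : MvPolynomial (Fin n) ℝ :=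
  ∑ J ∈ multiIdxLe n k, monomial (Finsupp.equivFunOnFinite.symm J) (c J)

theorem totalDegree_coeffPoly_le (c : (Fin n → ℕ) → ℝ) : (coeffPoly k c).totalDegree ≤ k := by
  refine totalDegree_finsetSum_le fun J hJ => (totalDegree_monomial_le _ _).trans ?_
  simpa [Finsupp.sum_fintype, mdeg] using mem_multiIdxLe.1 hJ

theorem eval_coeffPoly (c : (Fin n → ℕ) → ℝ) (y : Euc n) :
    eval (fun i => y i) (coeffPoly k c) = ∑ J ∈ multiIdxLe n k, c J * mpow y J := by
  simp [coeffPoly, mpow, eval_monomial, Finsupp.prod_fintype]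

theorem coeff_coeffPoly (c : (Fin n → ℕ) → ℝ) (d : Fin n →₀ ℕ) :
    coeff d (coeffPoly k c) = if ⇑d ∈ multiIdxLe n k then c d else 0 := by
  classical
  simp only [coeffPoly, coeff_sum, coeff_monomial, Equiv.symm_apply_eq, Finset.sum_ite_eq']
  rfl

theorem coeffPoly_coeff {P : MvPolynomial (Fin n) ℝ} (hP : P.totalDegree ≤ k) :
    coeffPoly k (fun J => coeff (Finsupp.equivFunOnFinite.symm J) P) = P := by
  ext d
  rw [coeff_coeffPoly]
  split_ifs with hd
  · simp
  · refine (coeff_eq_zero_of_totalDegree_lt (hP.trans_lt ?_)).symm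
    rw [Finset.sum_subset (Finset.subset_univ d.support) (fun i _ hi => by simpa using hi)]
    simpa [mem_multiIdxLe, mdeg] using hd

def expansionAt (k : ℕ) (c : (Fin n → ℕ) → ℝ) (x₀ x : Euc n) : ℝ :=
  ∑ J ∈ multiIdxLe n k, c J * mpow (x - x₀) J

theorem expansionAt_eq_eval (c : (Fin n → ℕ) → ℝ) (x₀ x : Euc n) :
    expansionAt k c x₀ x = eval (fun i => (x - x₀) i) (coeffPoly k c) :=
  (eval_coeffPoly c _).symm

theorem isPolyFun_expansionAt (c : (Fin n → ℕ) → ℝ) (x₀ : Euc n) :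
    IsPolyFun n k (expansionAt k c x₀) := by
  have h : IsPolyFun n k (fun y => ∑ J ∈ multiIdxLe n k, c J * mpow y J) :=
    ⟨coeffPoly k c, totalDegree_coeffPoly_le c, fun y => (eval_coeffPoly c y).symm⟩
  have h' := h.comp_const_add (-x₀)
  simp only [neg_add_eq_sub] at h'
  exact h'

theorem IsPolyFun.exists_eq_expansionAt {p : Euc n → ℝ} (hp : IsPolyFun n k p) (x₀ : Euc n) :
    ∃ c : (Fin n → ℕ) → ℝ, (∀ J ∉ multiIdxLe n k, c J = 0) ∧ p = expansionAt k c x₀ := by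
  classical
  obtain ⟨P, hPk, hP⟩ := hp.comp_const_add x₀
  refine ⟨fun J => if J ∈ multiIdxLe n k then coeff (Finsupp.equivFunOnFinite.symm J) P else 0,
    fun J hJ => if_neg hJ, funext fun x => ?_⟩
  have hx : p x = eval (fun i => (x - x₀) i) P := by simpa using hP (x - x₀)
  rw [hx, expansionAt_eq_eval]
  congr 1
  conv_lhs => rw [← coeffPoly_coeff hPk]
  exact Finset.sum_congr rfl fun J hJ => by simp only [if_pos hJ]

theorem eq_of_expansionAt_eq {c₁ c₂ : (Fin n → ℕ) → ℝ} {x₀ : Euc n}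
    (h : expansionAt k c₁ x₀ = expansionAt k c₂ x₀) {J : Fin n → ℕ} (hJ : J ∈ multiIdxLe n k) :
    c₁ J = c₂ J := by
  have hP : coeffPoly k c₁ = coeffPoly k c₂ := MvPolynomial.funext fun y => by
    simpa [expansionAt, ← eval_coeffPoly] using congrFun h (x₀ + WithLp.toLp 2 y)
  simpa [coeff_coeffPoly, hJ] using congrArg (coeff (Finsupp.equivFunOnFinite.symm J)) hP

end PolyFun

theorem tendsto_nhdsGT_zero_of_tendsto_half_pow {g : ℝ → ℝ≥0∞} {C : ℝ≥0∞} (hC : C ≠ ⊤)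
    (hg : ∀ r s, 0 < r → r ≤ s → s ≤ 2 * r → g r ≤ C * g s)
    (h : Tendsto (fun m : ℕ => g (2⁻¹ ^ m)) atTop (𝓝 0)) : Tendsto g (𝓝[>] 0) (𝓝 0) := by
  rw [ENNReal.tendsto_nhds_zero] at h ⊢
  intro ε hε
  obtain ⟨M, hM⟩ := (h (ε / C) (ENNReal.div_pos hε.ne' hC)).exists_forall_of_atTop
  filter_upwards [Ioo_mem_nhdsGT (pow_pos (by norm_num : (0 : ℝ) < 2⁻¹) M)] with r ⟨hr0, hrM⟩
  obtain ⟨m, hm, hm'⟩ := exists_nat_pow_near_of_lt_one hr0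
    (hrM.le.trans (pow_le_one₀ (by norm_num) (by norm_num))) (by norm_num : (0 : ℝ) < 2⁻¹)
    (by norm_num)
  have hMm : M ≤ m := by
    have := (pow_lt_pow_iff_right_of_lt_one₀ (by norm_num : (0 : ℝ) < 2⁻¹) (by norm_num)).1
      (hm.trans hrM)
    omega
  calc g r ≤ C * g (2⁻¹ ^ m) := hg _ _ hr0 hm' (by rw [pow_succ] at hm; linarith)
    _ ≤ C * (ε / C) := by gcongr; exact hM m hMm
    _ ≤ ε := ENNReal.mul_div_le

section Metric

variable {E : Type*} [PseudoMetricSpace E] [MeasurableSpace E] (μ : Measure E)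

def densityRatio (S : Set E) (x : E) (r : ℝ) : ℝ≥0∞ := μ (S ∩ ball x r) / μ (ball x r)

variable {μ}

theorem densityRatio_le_one (S : Set E) (x : E) (r : ℝ) : densityRatio μ S x r ≤ 1 :=
  ENNReal.div_le_of_le_mul (by simpa using measure_mono inter_subset_right)

theorem densityRatio_mono {S T : Set E} (h : S ⊆ T) (x : E) (r : ℝ) :
    densityRatio μ S x r ≤ densityRatio μ T x r :=
  ENNReal.div_le_div_right (measure_mono (inter_subset_inter_left _ h)) _

theorem densityRatio_union_le (S T : Set E) (x : E) (r : ℝ) :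
    densityRatio μ (S ∪ T) x r ≤ densityRatio μ S x r + densityRatio μ T x r := by
  rw [densityRatio, densityRatio, densityRatio, ENNReal.div_add_div_same, union_inter_distrib_right]
  exact ENNReal.div_le_div_right (measure_union_le _ _) _

theorem densityRatio_add_compl [ProperSpace E] [IsFiniteMeasureOnCompacts μ] [μ.IsOpenPosMeasure]
    {S : Set E} (hS : MeasurableSet S) (x : E) {r : ℝ} (hr : 0 < r) :
    densityRatio μ S x r + densityRatio μ Sᶜ x r = 1 := by
  rw [densityRatio, densityRatio, ENNReal.div_add_div_same, inter_comm, inter_comm Sᶜ,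
    ← sdiff_eq, measure_inter_add_sdiff _ hS]
  exact ENNReal.div_self (measure_ball_pos μ x hr).ne' measure_ball_lt_top.ne

theorem tendsto_densityRatio_mono {S T : Set E} {x : E} {l : Filter ℝ} (hST : S ⊆ T)
    (hT : Tendsto (densityRatio μ T x) l (𝓝 0)) :
    Tendsto (densityRatio μ S x) l (𝓝 0) :=
  tendsto_of_tendsto_of_tendsto_of_le_of_le tendsto_const_nhds hT (fun _ => bot_le)
    (fun r => densityRatio_mono hST x r)

theorem tendsto_densityRatio_union {S T : Set E} {x : E} {l : Filter ℝ}
    (hS : Tendsto (densityRatio μ S x) l (𝓝 0))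
    (hT : Tendsto (densityRatio μ T x) l (𝓝 0)) : Tendsto (densityRatio μ (S ∪ T) x) l (𝓝 0) :=
  tendsto_of_tendsto_of_tendsto_of_le_of_le tendsto_const_nhds (by simpa using hS.add hT)
    (fun _ => bot_le) (fun r => densityRatio_union_le S T x r)

end Metric

section Haar

variable {E : Type*} [NormedAddCommGroup E] [MeasurableSpace E] [BorelSpace E] {μ : Measure E}
  [μ.IsAddHaarMeasure]

theorem densityRatio_preimage_const_add (S : Set E) (x : E) :
    densityRatio μ ((x + ·) ⁻¹' S) 0 = densityRatio μ S x := by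
  ext r
  have : (x + ·) ⁻¹' S ∩ ball 0 r = (x + ·) ⁻¹' (S ∩ ball x r) := by
    ext y; simp [dist_eq_norm]
  rw [densityRatio, densityRatio, this, measure_preimage_add, Measure.addHaar_ball_center μ x]

variable [NormedSpace ℝ E] [FiniteDimensional ℝ E]

theorem densityRatio_le_mul (S : Set E) (x : E) {r s : ℝ} (hr : 0 < r) (hrs : r ≤ s)
    (hs : s ≤ 2 * r) :
    densityRatio μ S x r ≤ ENNReal.ofReal (2 ^ Module.finrank ℝ E) * densityRatio μ S x s := by
  have hball : μ (ball x s) ≤ ENNReal.ofReal (2 ^ Module.finrank ℝ E) * μ (ball x r) := by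
    rw [Measure.addHaar_ball_center μ x r, ← Measure.addHaar_ball_mul_of_pos μ x two_pos]
    exact measure_mono (ball_subset_ball hs)
  refine ENNReal.div_le_of_le_mul ?_
  calc μ (S ∩ ball x r) ≤ μ (S ∩ ball x s) :=
        measure_mono (inter_subset_inter_right _ (ball_subset_ball hrs))
    _ = densityRatio μ S x s * μ (ball x s) :=
        (ENNReal.div_mul_cancel (measure_ball_pos μ x (hr.trans_le hrs)).ne'
          measure_ball_lt_top.ne).symm
    _ ≤ densityRatio μ S x s * (ENNReal.ofReal (2 ^ Module.finrank ℝ E) * μ (ball x r)) := by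
        gcongr
    _ = _ := by ring

theorem densityRatio_smul {U : Set E} (hU : U ⊆ ball 0 1) {t : ℝ} (ht : 0 < t) :
    densityRatio μ (t • U) 0 t = μ U / μ (ball 0 1) := by
  have hball : ball (0 : E) t = t • ball 0 1 := by
    rw [smul_unitBall ht.ne', Real.norm_of_nonneg ht.le]
  rw [densityRatio, inter_eq_left.2 (hball ▸ smul_set_mono hU), hball, Measure.addHaar_smul,
    Measure.addHaar_smul, ENNReal.mul_div_mul_left _ _ (by simp [ht.ne']) ENNReal.ofReal_ne_top]

theorem measurable_densityRatio {α : Type*} [MeasurableSpace α] {S : α → Set E}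
    (hS : MeasurableSet {p : α × E | p.2 ∈ S p.1}) {ξ : α → E} (hξ : Measurable ξ) (r : ℝ) :
    Measurable fun a => densityRatio μ (S a) (ξ a) r := by
  have hW : MeasurableSet {p : α × E | p.2 ∈ S p.1 ∧ dist p.2 (ξ p.1) < r} :=
    hS.inter (measurableSet_lt (measurable_snd.dist (hξ.comp measurable_fst)) measurable_const)
  simp_rw [densityRatio, Measure.addHaar_ball_center μ _ r]
  exact (measurable_measure_prodMk_left hW).div_const _

theorem tendsto_densityRatio_iff_half_pow {S : Set E} {x : E} :
    Tendsto (densityRatio μ S x) (𝓝[>] 0) (𝓝 0) ↔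
      Tendsto (fun m : ℕ => densityRatio μ S x (2⁻¹ ^ m)) atTop (𝓝 0) := by
  refine ⟨fun h => h.comp ?_, tendsto_nhdsGT_zero_of_tendsto_half_pow ENNReal.ofReal_ne_top
    fun r s hr hrs hs => densityRatio_le_mul S x hr hrs hs⟩
  exact tendsto_nhdsWithin_iff.2 ⟨tendsto_pow_atTop_nhds_zero_of_lt_one (by norm_num) (by norm_num),
    Eventually.of_forall fun m => pow_pos (by norm_num : (0 : ℝ) < 2⁻¹) m⟩

theorem not_tendsto_densityRatio_zero {U T : Set E} (hU : U ⊆ ball 0 1) (hU0 : μ U ≠ 0)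
    (hT : ∀ᶠ t in 𝓝[>] (0 : ℝ), t • U ⊆ T) : ¬ Tendsto (densityRatio μ T 0) (𝓝[>] 0) (𝓝 0) := by
  intro h
  have hc : 0 < μ U / μ (ball 0 1) := ENNReal.div_pos hU0 measure_ball_lt_top.ne
  obtain ⟨t, ht, htT, hsmall⟩ :=
    (eventually_mem_nhdsWithin.and (hT.and (h.eventually (gt_mem_nhds hc)))).exists
  exact hsmall.not_ge ((densityRatio_smul hU ht).symm.le.trans (densityRatio_mono htT 0 t))

end Haar

open MvPolynomial in
theorem MvPolynomial.IsHomogeneous.exists_mem_ball_eval_ne_zero {n m : ℕ}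
    {φ : MvPolynomial (Fin n) ℝ} (hφ : φ.IsHomogeneous m) (h0 : φ ≠ 0) :
    ∃ y ∈ ball (0 : Euc n) 1, eval (WithLp.ofLp y) φ ≠ 0 := by
  obtain ⟨x, hx⟩ : ∃ x, eval x φ ≠ 0 := by
    by_contra! h
    exact h0 (MvPolynomial.funext fun x => by simp [h x])
  have hs : 0 < (‖WithLp.toLp 2 x‖ + 1)⁻¹ := by positivity
  refine ⟨(‖WithLp.toLp 2 x‖ + 1)⁻¹ • WithLp.toLp 2 x, ?_, ?_⟩
  · rw [mem_ball_zero_iff, norm_smul, Real.norm_of_nonneg hs.le, inv_mul_lt_iff₀ (by positivity)]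
    linarith
  · rw [WithLp.ofLp_smul, hφ.eval_smul]
    exact mul_ne_zero (pow_ne_zero _ hs.ne') hx

open MvPolynomial in
theorem MvPolynomial.exists_eventually_smul_subset_lt_abs_eval {n k : ℕ}
    {P : MvPolynomial (Fin n) ℝ} (hP : P ≠ 0) (hPk : P.totalDegree ≤ k) :
    ∃ U ⊆ ball (0 : Euc n) 1, volume U ≠ 0 ∧ ∃ ε > 0,
      ∀ᶠ t in 𝓝[>] (0 : ℝ), t • U ⊆ {y | ε * ‖y‖ ^ k < |eval (WithLp.ofLp y) P|} := by
  obtain ⟨j, hjP, hj, hlow⟩ := exists_homogeneousComponent_ne_zero hP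
  set Q := homogeneousComponent j P
  obtain ⟨y₀, hy₀, hQy₀⟩ :=
    (homogeneousComponent_isHomogeneous j P).exists_mem_ball_eval_ne_zero hj
  obtain ⟨C, hC⟩ := exists_bound_eval_smul_sub hjP hlow
    ((isCompact_closedBall (0 : Euc n) 1).image (PiLp.continuous_ofLp 2 _))
  set δ := |eval (WithLp.ofLp y₀) Q| / 2
  have hδ : 0 < δ := by positivity
  have hU0 : volume (ball (0 : Euc n) 1 ∩ {y | δ < |eval (WithLp.ofLp y) Q|}) ≠ 0 :=
    (isOpen_ball.inter (isOpen_lt continuous_const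
      ((continuous_eval Q).comp (PiLp.continuous_ofLp 2 _)).abs)).measure_ne_zero volume
      ⟨y₀, hy₀, half_lt_self (abs_pos.2 hQy₀)⟩
  refine ⟨_, inter_subset_left, hU0, δ / 2, half_pos hδ, ?_⟩
  have hsmall : ∀ᶠ t in 𝓝[>] (0 : ℝ), t * C < δ / 2 :=
    (tendsto_nhdsWithin_of_tendsto_nhds ((continuous_id.mul continuous_const).tendsto' 0 0
      (zero_mul C))).eventually (gt_mem_nhds (half_pos hδ))
  filter_upwards [self_mem_nhdsWithin, Ioo_mem_nhdsGT one_pos, hsmall]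
    with t (ht0 : 0 < t) ht1 htC
  rintro _ ⟨y, ⟨hy1, hyδ⟩, rfl⟩
  have hrem := hC _ ⟨y, ball_subset_closedBall hy1, rfl⟩ t ⟨ht0.le, ht1.2.le⟩
  have hnorm : ‖t • y‖ ^ k ≤ t ^ j := by
    calc ‖t • y‖ ^ k ≤ t ^ k := by
          gcongr
          rw [norm_smul, Real.norm_of_nonneg ht0.le]
          exact mul_le_of_le_one_right ht0.le (mem_ball_zero_iff.1 hy1).le
      _ ≤ t ^ j := pow_le_pow_of_le_one ht0.le ht1.2.le (hjP.trans hPk)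
  rw [mem_ofPred_eq, WithLp.ofLp_smul]
  calc δ / 2 * ‖t • y‖ ^ k ≤ δ / 2 * t ^ j := by gcongr
    _ < t ^ j * (|eval (WithLp.ofLp y) Q| - t * C) := by
        rw [mul_comm]
        exact mul_lt_mul_of_pos_left (by linarith [hyδ.out]) (pow_pos ht0 j)
    _ = |t ^ j * eval (WithLp.ofLp y) Q| - C * t ^ (j + 1) := by
        rw [abs_mul, abs_of_pos (pow_pos ht0 j)]; ring
    _ ≤ |eval (t • WithLp.ofLp y) P| := by
        linarith [abs_sub_abs_le_abs_sub (t ^ j * eval (WithLp.ofLp y) Q)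
          (eval (t • WithLp.ofLp y) P),
          abs_sub_comm (t ^ j * eval (WithLp.ofLp y) Q) (eval (t • WithLp.ofLp y) P)]

theorem IsPolyFun.eq_zero_of_tendsto_densityRatio {n k : ℕ} {q : Euc n → ℝ}
    (hq : IsPolyFun n k q)
    (h : ∀ ε > 0, Tendsto (densityRatio volume {y | ε * ‖y‖ ^ k < |q y|} 0) (𝓝[>] 0) (𝓝 0)) :
    q = 0 := by
  obtain ⟨P, hPk, hqP⟩ := hq
  suffices P = 0 by ext y; simp [hqP, this]
  by_contra hP
  obtain ⟨U, hU, hU0, ε, hε, hsub⟩ := MvPolynomial.exists_eventually_smul_subset_lt_abs_eval hP hPk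
  simp only [hqP] at h
  exact not_tendsto_densityRatio_zero hU hU0 hsub (h ε hε)

section ApproxDiff

variable {n k : ℕ} {D : Set (Euc n)} {f F : Euc n → ℝ} {x₀ : Euc n}

theorem densityZeroAt_iff_tendsto {S : Set (Euc n)} (hS : MeasurableSet S) {x : Euc n} :
    DensityZeroAt S x ↔ Tendsto (densityRatio volume S x) (𝓝[>] 0) (𝓝 0) := by
  have hcompl : ∀ᶠ r in 𝓝[>] (0 : ℝ),
      densityRatio volume Sᶜ x r = 1 - densityRatio volume S x r := by
    filter_upwards [self_mem_nhdsWithin] with r hr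
    exact ENNReal.eq_sub_of_add_eq
      (ne_top_of_le_ne_top ENNReal.one_ne_top (densityRatio_le_one _ _ _))
      ((add_comm _ _).trans (densityRatio_add_compl hS x hr))
  change Tendsto (densityRatio volume Sᶜ x) _ _ ↔ _
  rw [tendsto_congr' hcompl]
  constructor
  · intro h
    simpa [ENNReal.sub_sub_cancel ENNReal.one_ne_top (densityRatio_le_one _ _ _)] using
      ENNReal.Tendsto.sub tendsto_const_nhds h (Or.inl ENNReal.one_ne_top)
  · intro h
    simpa using ENNReal.Tendsto.sub tendsto_const_nhds h (Or.inl ENNReal.one_ne_top)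

theorem densityOneAt_iff_tendsto {S : Set (Euc n)} (hS : MeasurableSet S) {x : Euc n} :
    DensityOneAt S x ↔ Tendsto (densityRatio volume Sᶜ x) (𝓝[>] 0) (𝓝 0) := by
  rw [← densityZeroAt_iff_tendsto hS.compl, DensityZeroAt, compl_compl]

theorem DensityZeroAt.mono {S T : Set (Euc n)} {x : Euc n} (hT : DensityZeroAt T x)
    (hST : S ⊆ T) : DensityZeroAt S x :=
  tendsto_of_tendsto_of_tendsto_of_le_of_le hT tendsto_const_nhds
    (fun r => densityRatio_mono (compl_subset_compl.2 hST) x r) (fun r => densityRatio_le_one _ x r)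

theorem measurableSet_setOf_densityZeroAt {α : Type*} [MeasurableSpace α] {S : α → Set (Euc n)}
    (hS : MeasurableSet {p : α × Euc n | p.2 ∈ S p.1}) {ξ : α → Euc n} (hξ : Measurable ξ) :
    MeasurableSet {a | DensityZeroAt (S a) (ξ a)} := by
  have h (a : α) : DensityZeroAt (S a) (ξ a) ↔
      Tendsto (fun m : ℕ => densityRatio volume (S a) (ξ a) (2⁻¹ ^ m)) atTop (𝓝 0) :=
    (densityZeroAt_iff_tendsto (measurable_prodMk_left hS)).trans tendsto_densityRatio_iff_half_pow
  simp_rw [h]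
  exact measurableSet_tendsto _ fun m => measurable_densityRatio hS hξ _

theorem approxDiffAt_congr {p : Euc n → ℝ} (h : ∀ x ∈ D, F x = f x) :
    ApproxDiffAt k D F x₀ p ↔ ApproxDiffAt k D f x₀ p := by
  have hset (ε : ℝ) : {x | x ∈ D ∧ ε * ‖x - x₀‖ ^ k < |F x - p x|}
      = {x | x ∈ D ∧ ε * ‖x - x₀‖ ^ k < |f x - p x|} :=
    Set.ext fun x => and_congr_right fun hx => by rw [h x hx]
  simp only [ApproxDiffAt, hset]

theorem ApproxDiffAt.unique (hD : MeasurableSet D) (hF : Measurable F) {p₁ p₂ : Euc n → ℝ}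
    (h₁ : ApproxDiffAt k D F x₀ p₁) (h₂ : ApproxDiffAt k D F x₀ p₂) : p₁ = p₂ := by
  obtain ⟨hD₀, hp₁, hbad₁⟩ := h₁
  obtain ⟨-, hp₂, hbad₂⟩ := h₂
  have hbad {ε : ℝ} {p : Euc n → ℝ} (hp : IsPolyFun n k p)
      (h : DensityZeroAt {x | x ∈ D ∧ ε * ‖x - x₀‖ ^ k < |F x - p x|} x₀) :
      Tendsto (densityRatio volume {x | x ∈ D ∧ ε * ‖x - x₀‖ ^ k < |F x - p x|} x₀)
        (𝓝[>] 0) (𝓝 0) := by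
    have hmeas : MeasurableSet {x | x ∈ D ∧ ε * ‖x - x₀‖ ^ k < |F x - p x|} := by
      have := hp.continuous
      exact hD.inter (measurableSet_lt (f := fun x => ε * ‖x - x₀‖ ^ k) (by fun_prop) (by fun_prop))
    exact (densityZeroAt_iff_tendsto hmeas).1 h
  have hq : (fun y => p₁ (x₀ + y)) - (fun y => p₂ (x₀ + y)) = 0 := by
    refine ((hp₁.comp_const_add x₀).sub (hp₂.comp_const_add x₀)).eq_zero_of_tendsto_densityRatio
      fun ε hε => ?_
    have hpre : {y | ε * ‖y‖ ^ k < |((fun y => p₁ (x₀ + y)) - (fun y => p₂ (x₀ + y))) y|}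
        = (x₀ + ·) ⁻¹' {x | ε * ‖x - x₀‖ ^ k < |p₁ x - p₂ x|} := by
      ext y; simp
    have hsub : {x | ε * ‖x - x₀‖ ^ k < |p₁ x - p₂ x|} ⊆
        Dᶜ ∪ ({x | x ∈ D ∧ ε / 2 * ‖x - x₀‖ ^ k < |F x - p₁ x|}
          ∪ {x | x ∈ D ∧ ε / 2 * ‖x - x₀‖ ^ k < |F x - p₂ x|}) := by
      intro x hx
      by_contra hx'
      simp only [mem_union, mem_compl_iff, mem_ofPred_eq, not_or, not_not, not_and, not_lt] at hx'
      obtain ⟨hxD, h₁, h₂⟩ := hx'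
      linarith [abs_sub_le (p₁ x) (F x) (p₂ x), abs_sub_comm (p₁ x) (F x), h₁ hxD, h₂ hxD, hx.out]
    rw [hpre, densityRatio_preimage_const_add]
    exact tendsto_densityRatio_mono hsub (tendsto_densityRatio_union
      ((densityOneAt_iff_tendsto hD).1 hD₀) (tendsto_densityRatio_union
        (hbad hp₁ (hbad₁ _ (half_pos hε))) (hbad hp₂ (hbad₂ _ (half_pos hε)))))
  funext x
  simpa [sub_eq_zero] using congrFun hq (x - x₀)

theorem approxDiffAt_iff_forall_rat {p : Euc n → ℝ} (hp : IsPolyFun n k p) :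
    ApproxDiffAt k D f x₀ p ↔ DensityZeroAt Dᶜ x₀ ∧
      ∀ q : ℚ, 0 < q → DensityZeroAt {x | x ∈ D ∧ q * ‖x - x₀‖ ^ k < |f x - p x|} x₀ := by
  rw [ApproxDiffAt, DensityZeroAt, compl_compl]
  refine ⟨fun ⟨hD, _, h⟩ => ⟨hD, fun q hq => h q (Rat.cast_pos.2 hq)⟩, fun ⟨hD, h⟩ => ⟨hD, hp, ?_⟩⟩
  intro ε hε
  obtain ⟨q, hq0, hqε⟩ := exists_rat_btwn hε
  exact (h q (Rat.cast_pos.1 hq0)).mono fun x ⟨hxD, hx⟩ =>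
    ⟨hxD, lt_of_le_of_lt (by gcongr) hx⟩

theorem measurableSet_approxDiffAt_expansionAt (hD : MeasurableSet D) (hF : Measurable F) :
    MeasurableSet {z : Euc n × ((Fin n → ℕ) → ℝ) |
      ApproxDiffAt k D F z.1 (expansionAt k z.2 z.1)} := by
  simp_rw [approxDiffAt_iff_forall_rat (isPolyFun_expansionAt _ _), ofPred_and, ofPred_forall]
  have hexp : Measurable fun w : (Euc n × ((Fin n → ℕ) → ℝ)) × Euc n =>
      expansionAt k w.1.2 w.1.1 w.2 := by
    unfold expansionAt mpow
    fun_prop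
  refine (measurableSet_setOf_densityZeroAt (S := fun _ => Dᶜ) (measurable_snd hD.compl)
    measurable_fst).inter
    (MeasurableSet.iInter fun q => MeasurableSet.iInter fun _ =>
      measurableSet_setOf_densityZeroAt ?_ measurable_fst)
  exact (measurable_snd hD).inter (measurableSet_lt (by fun_prop) (by fun_prop))

theorem exists_measurable_expansionAt (hD : MeasurableSet D) (hF : Measurable F) :
    ∃ g : Euc n → (Fin n → ℕ) → ℝ, Measurable g ∧
      ∀ x₀ p, ApproxDiffAt k D F x₀ p → ApproxDiffAt k D F x₀ (expansionAt k (g x₀) x₀) := by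
  let G := {z : Euc n × ((Fin n → ℕ) → ℝ) |
    (∀ J ∉ multiIdxLe n k, z.2 J = 0) ∧ ApproxDiffAt k D F z.1 (expansionAt k z.2 z.1)}
  have hG : MeasurableSet G := by
    refine MeasurableSet.inter (s₁ := {z | ∀ J ∉ multiIdxLe n k, z.2 J = 0}) ?_
      (measurableSet_approxDiffAt_expansionAt hD hF)
    simp_rw [ofPred_forall]
    exact MeasurableSet.iInter fun J => MeasurableSet.iInter fun _ =>
      measurableSet_eq_fun (measurable_pi_apply J |>.comp measurable_snd) measurable_const
  have := hG.standardBorel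
  have hinj : Function.Injective fun z : G => z.1.1 := by
    rintro ⟨⟨x, c₁⟩, hc₁, h₁⟩ ⟨⟨x', c₂⟩, hc₂, h₂⟩ (rfl : x = x')
    have hc := ApproxDiffAt.unique hD hF h₁ h₂
    congr
    funext J
    by_cases hJ : J ∈ multiIdxLe n k
    · exact eq_of_expansionAt_eq hc hJ
    · exact (hc₁ J hJ).trans (hc₂ J hJ).symm
  have he : MeasurableEmbedding fun z : G => z.1.1 :=
    (measurable_fst.comp measurable_subtype_coe).measurableEmbedding hinj
  let g := Function.extend (fun z : G => z.1.1) (fun z => z.1.2) (0 : Euc n → (Fin n → ℕ) → ℝ)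
  refine ⟨g,
    he.measurable_extend (measurable_snd.comp measurable_subtype_coe) measurable_const,
    fun x₀ p hp => ?_⟩
  obtain ⟨c, hc, rfl⟩ := hp.2.1.exists_eq_expansionAt x₀
  have hz : (x₀, c) ∈ G := ⟨hc, hp⟩
  rwa [show g x₀ = c from hinj.extend_apply _ _ ⟨(x₀, c), hz⟩]

end ApproxDiff

theorem stmt11_general (n : ℕ) (D : Set (Euc n)) (hD : MeasurableSet D)
    (k : ℕ) (f : Euc n → ℝ) (hf : Measurable (D.restrict f))
    (hdiff : ∀ᵐ x₀ ∂(volume.restrict D), ∃ p : Euc n → ℝ, ApproxDiffAt k D f x₀ p) :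
    ∃ a : (Fin n → ℕ) → Euc n → ℝ,
      (∀ J ∈ multiIdxLe n k, Measurable (D.restrict (a J))) ∧
      ∀ᵐ x₀ ∂(volume.restrict D),
        ApproxDiffAt k D f x₀
          (fun x => ∑ J ∈ multiIdxLe n k, a J x₀ * mpow (x - x₀) J) := by
  obtain ⟨F, hF, hFf⟩ :=
    (MeasurableEmbedding.subtype_coe hD).exists_measurable_extend hf fun _ => ⟨0⟩
  have hFD : ∀ x ∈ D, F x = f x := fun x hx => congrFun hFf ⟨x, hx⟩
  obtain ⟨g, hg, hgF⟩ := exists_measurable_expansionAt (k := k) hD hF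
  refine ⟨fun J x₀ => g x₀ J, fun J _ => ((measurable_pi_apply J).comp hg).comp
    measurable_subtype_coe, ?_⟩
  filter_upwards [hdiff] with x₀ ⟨p, hp⟩
  exact (approxDiffAt_congr hFD).1 (hgF x₀ p ((approxDiffAt_congr hFD).2 hp))

/-- **Proposition 4.3** (abelian case). If `f` is approximately differentiable of
order `k` a.e. on `D`, then the coefficients of the approximate derivatives can be
chosen to be measurable functions on `D`. -/
theorem stmt11 (n : ℕ) (hn : 0 < n) (D : Set (Euc n)) (hD : MeasurableSet D)
    (k : ℕ) (f : Euc n → ℝ) (hf : Measurable (D.restrict f))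
    (hdiff : ∀ᵐ x₀ ∂(volume.restrict D), ∃ p : Euc n → ℝ, ApproxDiffAt k D f x₀ p) :
    ∃ a : (Fin n → ℕ) → Euc n → ℝ,
      (∀ J ∈ multiIdxLe n k, Measurable (D.restrict (a J))) ∧
      ∀ᵐ x₀ ∂(volume.restrict D),
        ApproxDiffAt k D f x₀
          (fun x => ∑ J ∈ multiIdxLe n k, a J x₀ * mpow (x - x₀) J) :=
  stmt11_general n D hD k f hf hdiff
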